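/- arXiv:1712.03168 — 4 statements merged into one kernel-verified Lean document; each statement's English description precedes it below -/
import Mathlib

section
/- Let q ∈ (0,1), let I ≥ 1 be an integer, and let n_1, …, n_I be positive integers with sum S. Write m = ⌊S/I⌋ and r = S mod I (so that the near-balanced list consists of r parts equal to m+1 and I−r parts equal to m). Then (I−r)·q^{−m} + r·q^{−(m+1)} ≤ q^{−n_1} + … + q^{−n_I}. -/
/-- The cost of a list of group sizes: `q^{-n_1} + ⋯ + q^{-n_I}`. -/
noncomputable def cost (q : ℝ) (l : List ℕ) : ℝ := (l.map fun n => q ^ (-(n : ℝ))).sum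

/-- Bernoulli inequality for integer exponents, base `> 1`. -/
lemma bern_zpow (t : ℝ) (ht : 1 < t) (k : ℤ) : 1 + (k : ℝ) * (t - 1) ≤ t ^ k := by
  obtain ⟨n, rfl | rfl⟩ := k.eq_nat_or_neg
  · rw [zpow_natCast]
    have := one_add_mul_le_pow (a := t - 1) (by nlinarith) n
    simpa using this
  · have ht0 : (0:ℝ) < t := by linarith
    have hinv : (0:ℝ) < t⁻¹ := by positivity
    have h1 := one_add_mul_le_pow (a := t⁻¹ - 1) (by nlinarith) n
    have h2 : (1 + (t⁻¹ - 1)) ^ n = t⁻¹ ^ n := by ring_nf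
    rw [h2] at h1
    have hz : t ^ (-(n:ℤ)) = t⁻¹ ^ n := by
      rw [zpow_neg, zpow_natCast, inv_pow]
    rw [hz]
    refine le_trans ?_ h1
    have key : (0:ℝ) ≤ (n:ℝ) * ((t⁻¹ - 1) + (t - 1)) := by
      have h3 : t⁻¹ - 1 + (t - 1) = (t - 1)^2 / t := by field_simp; ring
      rw [h3]; positivity
    push_cast
    nlinarith

lemma cost_eq (q : ℝ) (l : List ℕ) :
    cost q l = (l.map (fun n : ℕ => q ^ (-(n : ℝ)))).sum := by
  induction l with
  | nil => simp [cost]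
  | cons x xs ih => simp_all [cost]

lemma list_sum_affine (a c : ℝ) (l : List ℕ) :
    (l.map (fun n : ℕ => a + (n : ℝ) * c)).sum = l.length * a + (l.sum : ℝ) * c := by
  induction l with
  | nil => simp
  | cons x xs ih =>
    simp only [List.map_cons, List.sum_cons, List.length_cons, ih]
    push_cast; ring

/-- For `q ∈ (0,1)` and positive integers `n_1, …, n_I` (`I ≥ 1`) with sum `S`, writing
`m = ⌊S/I⌋` and `r = S mod I`, the near-balanced cost
`(I - r) * q^{-m} + r * q^{-(m+1)}` is a lower bound for `q^{-n_1} + ⋯ + q^{-n_I}`. -/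
theorem stmt_4 (q : ℝ) (hq : q ∈ Set.Ioo (0 : ℝ) 1)
    (l : List ℕ) (hl : l ≠ []) (hpos : ∀ n ∈ l, 0 < n)
    (m r : ℕ) (hm : m = l.sum / l.length) (hr : r = l.sum % l.length) :
    ((l.length - r : ℕ) : ℝ) * q ^ (-(m : ℝ)) + (r : ℝ) * q ^ (-((m : ℝ) + 1)) ≤
      cost q l := by
  obtain ⟨hq0, hq1⟩ := hq
  set t : ℝ := q⁻¹ with htdef
  have ht : 1 < t := (one_lt_inv₀ hq0).mpr hq1
  have ht0 : (0:ℝ) < t := by linarith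
  have hpow : ∀ n : ℕ, q ^ (-(n:ℝ)) = t ^ n := by
    intro n
    rw [Real.rpow_neg hq0.le, Real.rpow_natCast, htdef, inv_pow]
  set c : ℝ := t ^ (m+1) - t ^ m with hcdef
  -- pointwise bound
  have hpt : ∀ n : ℕ, (t ^ m - (m:ℝ) * c) + (n:ℝ) * c ≤ t ^ n := by
    intro n
    have hb := bern_zpow t ht ((n:ℤ) - m)
    have hmul := mul_le_mul_of_nonneg_left hb (le_of_lt (pow_pos ht0 m))
    have hzp : t ^ (m:ℕ) * t ^ ((n:ℤ) - m) = t ^ (n:ℕ) := by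
      rw [← zpow_natCast t m, ← zpow_add₀ (ne_of_gt ht0), ← zpow_natCast t n]
      ring_nf
    rw [hzp] at hmul
    refine le_trans (le_of_eq ?_) hmul
    have : c = t ^ m * (t - 1) := by rw [hcdef, pow_succ]; ring
    rw [this]
    push_cast
    ring
  -- sum the pointwise bounds
  have hsum : (l.map (fun n : ℕ => (t ^ m - (m:ℝ) * c) + (n:ℝ) * c)).sum ≤ cost q l := by
    rw [cost_eq]
    refine List.sum_le_sum (l := l) (f := fun n => (t ^ m - (m:ℝ) * c) + (n:ℝ) * c)
      (g := fun n => q ^ (-(n:ℝ))) ?_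
    intro n hn
    rw [hpow n]
    exact hpt n
  rw [list_sum_affine] at hsum
  -- arithmetic
  have hI : 0 < l.length := List.length_pos_iff.mpr hl
  have hrI : r < l.length := hr ▸ Nat.mod_lt _ hI
  have hdm : l.length * m + r = l.sum := by rw [hm, hr]; exact Nat.div_add_mod _ _
  have hS : (l.sum : ℝ) = (l.length : ℝ) * m + r := by
    rw [← hdm]; push_cast; ring
  have hcast : ((l.length - r : ℕ) : ℝ) = (l.length : ℝ) - r := by
    rw [Nat.cast_sub hrI.le]
  rw [hcast, hpow m]
  have hpow1 : q ^ (-((m : ℝ) + 1)) = t ^ (m+1) := by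
    have : -((m:ℝ)+1) = -(((m+1 : ℕ)):ℝ) := by push_cast; ring
    rw [this, hpow (m+1)]
  rw [hpow1]
  refine le_trans (le_of_eq ?_) hsum
  rw [hS, hcdef]
  ring
end

section
/- Let q ∈ (1/2, 1) and let n* be a positive integer such that n*·q^{n*} ≥ n·q^n for every positive integer n. Let N ≥ 1 be an integer divisible by n*. Then for every finite list (n_1,…,n_I) of positive integers with n_1 + … + n_I = N, one has (N/n*)·q^{−n*} ≤ q^{−n_1} + … + q^{−n_I}; that is, the composition of N into N/n* parts each equal to n* minimizes the cost over all compositions of N. -/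
/-- For `q ∈ (1/2, 1)`, `n*` a positive-integer maximizer of `n * q^n`, and `N ≥ 1`
divisible by `n*`: every composition of `N` into positive parts has cost at least
`(N / n*) * q^{-n*}`, i.e. the composition into `N / n*` parts each equal to `n*`
minimizes the cost. -/
theorem stmt_7 (q : ℝ) (hq : q ∈ Set.Ioo (1 / 2 : ℝ) 1)
    (ns : ℕ) (hns : 0 < ns)
    (hmax : ∀ n : ℕ, 0 < n → (n : ℝ) * q ^ (n : ℝ) ≤ (ns : ℝ) * q ^ (ns : ℝ))
    (N : ℕ) (hN : 1 ≤ N) (hdvd : ns ∣ N)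
    (l : List ℕ) (hpos : ∀ n ∈ l, 0 < n) (hsum : l.sum = N) :
    ((N / ns : ℕ) : ℝ) * q ^ (-(ns : ℝ)) ≤ cost q l := by
  have hq0 : (0:ℝ) < q := lt_trans (by norm_num) hq.1
  have hns0 : (0:ℝ) < (ns:ℝ) := by exact_mod_cast hns
  have key : ∀ n : ℕ, 0 < n → ((n:ℝ) / ns) * q ^ (-(ns : ℝ)) ≤ q ^ (-(n : ℝ)) := by
    intro n hn
    have h := hmax n hn
    have hpn : (0:ℝ) < q ^ (n:ℝ) := Real.rpow_pos_of_pos hq0 _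
    have hpns : (0:ℝ) < q ^ (ns:ℝ) := Real.rpow_pos_of_pos hq0 _
    rw [Real.rpow_neg hq0.le, Real.rpow_neg hq0.le, inv_eq_one_div, inv_eq_one_div,
      div_mul_div_comm, mul_one, div_le_div_iff₀ (by positivity) hpn]
    nlinarith
  have main : ∀ l : List ℕ, (∀ n ∈ l, 0 < n) →
      ((l.sum : ℝ) / ns) * q ^ (-(ns : ℝ)) ≤ cost q l := by
    intro l
    induction l with
    | nil => intro _; simp [cost]
    | cons a t ih =>
      intro h
      have h1 := key a (h a (by simp))
      have h2 := ih (fun n hn => h n (by simp [hn]))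
      simp only [cost, List.map_cons, List.sum_cons, List.sum_cons] at *
      rw [Nat.cast_add]
      calc ((a : ℝ) + t.sum) / ns * q ^ (-(ns : ℝ))
          = (a : ℝ) / ns * q ^ (-(ns : ℝ)) + (t.sum : ℝ) / ns * q ^ (-(ns : ℝ)) := by ring
        _ ≤ _ := add_le_add h1 h2
  have := main l hpos
  rw [hsum] at this
  rwa [Nat.cast_div hdvd (by exact_mod_cast hns.ne')]
end

section
/- Let q ∈ (1/2, 1), set n** = 1/ln(1/q), assume n** is not an integer, write a = ⌊n**⌋, and assume the tie a·q^a = (a+1)·q^{a+1} holds. Let N ≥ 1, s = ⌊N/a⌋, θ = N − s·a, and assume 1 ≤ θ ≤ s. Then for every finite list (n_1,…,n_I) of positive integers with n_1 + … + n_I = N, one has (s−θ)·q^{−a} + θ·q^{−(a+1)} ≤ q^{−n_1} + … + q^{−n_I}; that is, the composition of N into θ parts of size a+1 and s−θ parts of size a minimizes the cost over all compositions of N. -/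
/-- Tie case: for `q ∈ (1/2, 1)`, `n** = 1/ln(1/q)` not an integer, `a = ⌊n**⌋` with
`a q^a = (a+1) q^{a+1}`, `N ≥ 1`, `s = ⌊N/a⌋`, `θ = N - s·a` and `1 ≤ θ ≤ s`:
every composition of `N` into positive parts has cost at least
`(s - θ) q^{-a} + θ q^{-(a+1)}`, i.e. the composition into `θ` parts of size `a+1`
and `s - θ` parts of size `a` is optimal. -/
theorem stmt_8 (q : ℝ) (hq : q ∈ Set.Ioo (1 / 2 : ℝ) 1)
    (nss : ℝ) (hnss : nss = 1 / Real.log (1 / q))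
    (hnotint : ¬ ∃ m : ℤ, (m : ℝ) = nss)
    (a : ℕ) (ha : a = ⌊nss⌋₊)
    (htie : (a : ℝ) * q ^ (a : ℝ) = ((a : ℝ) + 1) * q ^ ((a : ℝ) + 1))
    (N s θ : ℕ) (hN : 1 ≤ N) (hs : s = N / a) (hθ : θ = N - s * a)
    (hθ1 : 1 ≤ θ) (hθs : θ ≤ s)
    (l : List ℕ) (hpos : ∀ n ∈ l, 0 < n) (hsum : l.sum = N) :
    ((s - θ : ℕ) : ℝ) * q ^ (-(a : ℝ)) + (θ : ℝ) * q ^ (-((a : ℝ) + 1)) ≤ cost q l := by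
  obtain ⟨hq0', hq1⟩ := hq
  have hq0 : (0:ℝ) < q := lt_trans (by norm_num) hq0'
  -- rewrite the tie in nat powers
  have htie' : (a : ℝ) * q ^ a = ((a : ℝ) + 1) * q ^ (a + 1) := by
    have h1 : ((a:ℝ) + 1) = (((a+1 : ℕ)):ℝ) := by push_cast; ring
    rw [h1] at htie
    rw [Real.rpow_natCast, Real.rpow_natCast] at htie
    exact_mod_cast htie
  have hpowpos : ∀ m : ℕ, (0:ℝ) < q ^ m := fun m => pow_pos hq0 m
  -- tie forces a = (a+1) q
  have hq_eq : (a:ℝ) = ((a:ℝ) + 1) * q := by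
    have h : ((a:ℝ)) * q ^ a = (((a:ℝ) + 1) * q) * q ^ a := by
      rw [htie']; ring
    exact mul_right_cancel₀ (hpowpos a).ne' h
  have ha1 : 1 ≤ a := by
    by_contra h
    have : a = 0 := by omega
    rw [this] at hq_eq
    simp at hq_eq
    linarith
  have hapos : (0:ℝ) < (a:ℝ) := by exact_mod_cast ha1
  -- key: n q^n ≤ a q^a for all n ≥ 1
  -- step inequalities
  have hstep_up : ∀ m : ℕ, m ≤ a → (m:ℝ) * q ^ m ≤ ((m:ℝ)+1) * q ^ (m+1) := by
    intro m hm
    have hm' : (m:ℝ) ≤ a := by exact_mod_cast hm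
    have h1 : (m:ℝ) ≤ ((m:ℝ)+1) * q := by
      have h2 : ((a:ℝ)+1) * ((m:ℝ)+1) * q - ((a:ℝ)+1) * (m:ℝ) = (a:ℝ) - m := by
        nlinarith [hq_eq]
      nlinarith [hq_eq]
    calc (m:ℝ) * q ^ m ≤ (((m:ℝ)+1) * q) * q ^ m := by
          exact mul_le_mul_of_nonneg_right h1 (hpowpos m).le
      _ = ((m:ℝ)+1) * q ^ (m+1) := by ring
  have hstep_down : ∀ m : ℕ, a ≤ m → ((m:ℝ)+1) * q ^ (m+1) ≤ (m:ℝ) * q ^ m := by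
    intro m hm
    have hm' : (a:ℝ) ≤ m := by exact_mod_cast hm
    have h1 : ((m:ℝ)+1) * q ≤ (m:ℝ) := by nlinarith [hq_eq]
    calc ((m:ℝ)+1) * q ^ (m+1) = (((m:ℝ)+1) * q) * q ^ m := by ring
      _ ≤ (m:ℝ) * q ^ m := mul_le_mul_of_nonneg_right h1 (hpowpos m).le
  have hkey : ∀ n : ℕ, (n:ℝ) * q ^ n ≤ (a:ℝ) * q ^ a := by
    intro n
    rcases le_total n a with h | h
    · -- upward induction on a - k
      have haux : ∀ k : ℕ, ((a - k : ℕ):ℝ) * q ^ (a - k) ≤ (a:ℝ) * q ^ a := by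
        intro k
        induction k with
        | zero => simp
        | succ k ih =>
          rcases le_or_gt a k with hk | hk
          · have : a - (k+1) = a - k := by omega
            rw [this]; exact ih
          · have heq : a - k = (a - (k+1)) + 1 := by omega
            have hle : a - (k+1) ≤ a := by omega
            have := hstep_up (a - (k+1)) hle
            have hcast : ((a - k : ℕ):ℝ) = ((a - (k+1) : ℕ):ℝ) + 1 := by
              rw [heq]; push_cast; ring
            calc ((a - (k+1) : ℕ):ℝ) * q ^ (a - (k+1))
                ≤ (((a - (k+1) : ℕ):ℝ)+1) * q ^ ((a - (k+1))+1) := this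
              _ = ((a - k : ℕ):ℝ) * q ^ (a - k) := by rw [heq]; push_cast; ring
              _ ≤ (a:ℝ) * q ^ a := ih
      have := haux (a - n)
      have hn : a - (a - n) = n := by omega
      rwa [hn] at this
    · -- downward induction from a
      induction n, h using Nat.le_induction with
      | base => exact le_refl _
      | succ m hm ih =>
        have := hstep_down m hm
        have hcast : ((m+1 : ℕ):ℝ) = (m:ℝ) + 1 := by push_cast; ring
        calc ((m+1 : ℕ):ℝ) * q ^ (m+1) = ((m:ℝ)+1) * q ^ (m+1) := by rw [hcast]
          _ ≤ (m:ℝ) * q ^ m := this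
          _ ≤ (a:ℝ) * q ^ a := ih
  -- per-term bound
  set c : ℝ := (q ^ a)⁻¹ / a with hc
  have hterm : ∀ n : ℕ, (n:ℝ) * c ≤ q ^ (-(n : ℝ)) := by
    intro n
    rw [Real.rpow_neg hq0.le, Real.rpow_natCast]
    have h1 : (n:ℝ) * c = (n:ℝ) / (q ^ a * a) := by rw [hc]; ring
    rw [h1, show (q ^ n : ℝ)⁻¹ = 1 / q ^ n from (one_div _).symm,
      div_le_div_iff₀ (by positivity) (by positivity)]
    nlinarith [hkey n]
  -- cost lower bound
  have hcost : ∀ L : List ℕ, ((L.sum : ℕ):ℝ) * c ≤ cost q L := by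
    intro L
    induction L with
    | nil => simp [cost]
    | cons h t ih =>
      have : cost q (h :: t) = q ^ (-(h:ℝ)) + cost q t := by simp [cost]
      rw [this]
      have hcast : (((h :: t).sum : ℕ):ℝ) = (h:ℝ) + ((t.sum : ℕ):ℝ) := by
        push_cast [List.sum_cons]; ring
      rw [hcast, add_mul]
      exact add_le_add (hterm h) ih
  have hcostN : (N:ℝ) * c ≤ cost q l := by
    have := hcost l
    rwa [hsum] at this
  -- arithmetic: N = s*a + θ
  have hsa : s * a ≤ N := by rw [hs]; exact Nat.div_mul_le_self N a
  have hNeq : s * a + θ = N := by omega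
  have hcastsθ : ((s - θ : ℕ):ℝ) = (s:ℝ) - (θ:ℝ) := by
    exact Nat.cast_sub hθs
  -- the target equals N * c
  have htarget : ((s - θ : ℕ):ℝ) * q ^ (-(a : ℝ)) + (θ:ℝ) * q ^ (-((a : ℝ) + 1))
      = (N:ℝ) * c := by
    have h1 : q ^ (-(a : ℝ)) = (q ^ a)⁻¹ := by
      rw [Real.rpow_neg hq0.le, Real.rpow_natCast]
    have h2 : q ^ (-((a : ℝ) + 1)) = (q ^ (a+1))⁻¹ := by
      rw [show ((a:ℝ) + 1) = (((a+1 : ℕ)):ℝ) by push_cast; ring,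
        Real.rpow_neg hq0.le, Real.rpow_natCast]
    rw [h1, h2, hcastsθ, hc, pow_succ, mul_inv]
    have hNcast : (N:ℝ) = (s:ℝ) * a + θ := by
      rw [← hNeq]; push_cast; ring
    rw [hNcast]
    have hqq : q⁻¹ = ((a:ℝ)+1)/(a:ℝ) := by
      rw [eq_div_iff hapos.ne', inv_mul_eq_iff_eq_mul₀ hq0.ne']
      linarith [hq_eq]
    rw [hqq]
    have hpa : (q:ℝ) ^ a ≠ 0 := (hpowpos a).ne'
    field_simp
    ring
  rw [htarget]
  exact hcostN
end

section
/- Let q ∈ (0,1) and let n* be a positive integer such that n*·q^{n*} ≥ n·q^n for every positive integer n. Then for every integer N ≥ 1 and every finite list (n_1,…,n_I) of positive integers with n_1 + … + n_I = N, one has q^{−n_1} + … + q^{−n_I} ≥ N/(n*·q^{n*}). -/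
theorem div_le_rpow_neg_of_mul_rpow_le {q x M : ℝ} (hq : 0 < q) (hx : 0 ≤ x)
    (h : x * q ^ x ≤ M) : x / M ≤ q ^ (-x) := by
  rcases le_or_gt M 0 with hM | hM
  · exact (div_nonpos_of_nonneg_of_nonpos hx hM).trans (Real.rpow_pos_of_pos hq _).le
  · rw [div_le_iff₀ hM]
    calc x = x * q ^ x * q ^ (-x) := by
          rw [mul_assoc, ← Real.rpow_add hq, add_neg_cancel, Real.rpow_zero, mul_one]
      _ ≤ M * q ^ (-x) := mul_le_mul_of_nonneg_right h (Real.rpow_pos_of_pos hq _).le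
      _ = q ^ (-x) * M := mul_comm _ _

-- In `cost` the binder `n` is elaborated at type `ℝ`, so `l` is first lifted to `List ℝ`
-- through the list monad.
theorem cost_eq_sum_map (q : ℝ) (l : List ℕ) :
    cost q l = (l.map fun n : ℕ => q ^ (-(n : ℝ))).sum := by
  rw [cost, List.bind_eq_flatMap, ← Function.comp_def pure, List.flatMap_pure_eq_map,
    List.map_map]
  rfl

theorem sum_div_le_cost {q M : ℝ} (hq : 0 < q) {l : List ℕ}
    (h : ∀ n ∈ l, (n : ℝ) * q ^ (n : ℝ) ≤ M) : (l.sum : ℝ) / M ≤ cost q l := by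
  calc (l.sum : ℝ) / M = (l.map fun n : ℕ => (n : ℝ) / M).sum := by
        simp only [div_eq_mul_inv, Nat.cast_list_sum, List.sum_map_mul_right]
    _ ≤ (l.map fun n : ℕ => q ^ (-(n : ℝ))).sum := List.sum_le_sum fun n hn =>
        div_le_rpow_neg_of_mul_rpow_le hq n.cast_nonneg (h n hn)
    _ = cost q l := (cost_eq_sum_map q l).symm

theorem stmt_11_general (q : ℝ) (hq : q ∈ Set.Ioo (0 : ℝ) 1)
    (ns : ℕ)
    (hmax : ∀ n : ℕ, 0 < n → (n : ℝ) * q ^ (n : ℝ) ≤ (ns : ℝ) * q ^ (ns : ℝ))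
    (N : ℕ)
    (l : List ℕ) (hpos : ∀ n ∈ l, 0 < n) (hsum : l.sum = N) :
    (N : ℝ) / ((ns : ℝ) * q ^ (ns : ℝ)) ≤ cost q l := by
  subst hsum
  exact sum_div_le_cost hq.1 fun n hn => hmax n (hpos n hn)

/-- For `q ∈ (0,1)` and `n*` a positive-integer maximizer of `n * q^n`: every
composition of `N ≥ 1` into positive parts has cost at least `N / (n* * q^{n*})`. -/
theorem stmt_11 (q : ℝ) (hq : q ∈ Set.Ioo (0 : ℝ) 1)
    (ns : ℕ) (hns : 0 < ns)
    (hmax : ∀ n : ℕ, 0 < n → (n : ℝ) * q ^ (n : ℝ) ≤ (ns : ℝ) * q ^ (ns : ℝ))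
    (N : ℕ) (hN : 1 ≤ N)
    (l : List ℕ) (hpos : ∀ n ∈ l, 0 < n) (hsum : l.sum = N) :
    (N : ℝ) / ((ns : ℝ) * q ^ (ns : ℝ)) ≤ cost q l :=
  stmt_11_general q hq ns hmax N l hpos hsum
end
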